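/- If B is a t-(n,k,λ;q) design, then B^⊥ = {K^⊥ : K ∈ B} is a t-(n,n-k,λ^⊥;q) design, where λ^⊥ = λ · [n-t choose k]_q / [n-t choose k-t]_q. -/

import Mathlib

open scoped Classical
open Matrix

variable {F : Type*} [Field F] [Fintype F] {n : ℕ}

/-- Orthogonal complement w.r.t. the standard bilinear form on `Fin n → F`. -/
def stdPerp (K : Submodule F (Fin n → F)) : Submodule F (Fin n → F) where
  carrier := {x | ∀ y ∈ K, ∑ i, x i * y i = 0}
  add_mem' := by
    intro a b ha hb y hy
    simp only [Set.mem_setOf_eq] at *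
    simp [Pi.add_apply, add_mul, Finset.sum_add_distrib, ha y hy, hb y hy]
  zero_mem' := by intro y hy; simp
  smul_mem' := by
    intro c a ha y hy
    simp only [Set.mem_setOf_eq] at *
    simp [Pi.smul_apply, smul_eq_mul, mul_assoc, ← Finset.mul_sum, ha y hy]

def mact (A : Matrix (Fin n) (Fin n) F) (K : Submodule F (Fin n → F)) :
    Submodule F (Fin n → F) :=
  K.map A.mulVecLin

/-- A `t-(n,k,λ;q)` design over the finite field `F`. -/
def IsDesign (F : Type*) [Field F] [Fintype F] (n t k lam : ℕ)
    (B : Finset (Submodule F (Fin n → F))) : Prop :=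
  (∀ K ∈ B, Module.finrank F K = k) ∧
  ∀ T : Submodule F (Fin n → F), Module.finrank F T = t →
    (B.filter (fun K => T ≤ K)).card = lam

/-- Gaussian binomial coefficient `[m choose j]_q`. -/
def gaussBinom (q m j : ℕ) : ℕ :=
  (∏ i ∈ Finset.range j, (q ^ (m - i) - 1)) / (∏ i ∈ Finset.range j, (q ^ (j - i) - 1))

/-- A large set `LS_q[N](t,k,n)`. -/
def IsLargeSet (F : Type*) [Field F] [Fintype F] (n t k lam N : ℕ)
    (L : Finset (Finset (Submodule F (Fin n → F)))) : Prop :=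
  L.card = N ∧
  (∀ B ∈ L, IsDesign F n t k lam B) ∧
  (∀ B ∈ L, ∀ B' ∈ L, B ≠ B' → Disjoint B B') ∧
  (∀ K : Submodule F (Fin n → F), Module.finrank F K = k ↔ ∃ B ∈ L, K ∈ B)

def GLT (α : Matrix.GeneralLinearGroup (Fin n) F) : Matrix.GeneralLinearGroup (Fin n) F :=
  ⟨(↑α : Matrix (Fin n) (Fin n) F)ᵀ, (↑α⁻¹ : Matrix (Fin n) (Fin n) F)ᵀ,
    by rw [← Matrix.transpose_mul, ← Matrix.transpose_one]; exact congrArg Matrix.transpose α.inv_mul,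
    by rw [← Matrix.transpose_mul, ← Matrix.transpose_one]; exact congrArg Matrix.transpose α.mul_inv⟩

/-
Since `T ≤ K^⊥ ↔ K ≤ T^⊥` and `K ↦ K^⊥` is injective, it suffices to count the blocks contained
in a fixed subspace of codimension `t`. More generally, the number `λ_{i,j}` of blocks `K` with
`U ≤ K ≤ W`, where `dim U = i`, `codim W = j` and `i + j ≤ t`, is `λ [n-i-j, k-i]_q / [n-t, k-t]_q`.
For `j = 0` this says that a `t`-design is an `i`-design, and follows by counting the pairs
`(U', K)` with `U ⋖ U' ≤ K` downwards from `i = t`. If `W` is a hyperplane of `W₁`, the blocks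
between `U` and `W₁` that are not in `W` are counted through the pairs `(U', K)` with
`U ⋖ U' ≤ K ≤ W₁`, `U' ⊄ W`: there are `q^(n-j-k) λ_{i+1,j}` of them, and the q-Pascal rule
gives `λ_{i,j+1}`. Both double counts rest on the fact that the spaces `U'` with `U ⋖ U' ≤ X`,
`U' ⊄ Y` are the fibres of `v ↦ U ⊔ ⟨v⟩` on `X \ Y`, each of size `q^(i+1) - q^i`.
-/

open Finset Module

-- `[m choose r]_q` through the q-Pascal rule, which avoids the truncated division of `gaussBinom`.
def qBinom (q : ℕ) : ℕ → ℕ → ℕ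
  | _, 0 => 1
  | 0, _ + 1 => 0
  | m + 1, r + 1 => qBinom q m (r + 1) + q ^ (m - r) * qBinom q m r

section QBinom

@[simp] lemma qBinom_zero_right (q m : ℕ) : qBinom q m 0 = 1 := by cases m <;> rfl

lemma qBinom_succ_succ (q m r : ℕ) :
    qBinom q (m + 1) (r + 1) = qBinom q m (r + 1) + q ^ (m - r) * qBinom q m r := rfl

lemma qBinom_eq_zero_of_lt (q : ℕ) {m r : ℕ} (h : m < r) : qBinom q m r = 0 := by
  induction m generalizing r with
  | zero => obtain ⟨r, rfl⟩ := Nat.exists_eq_add_one.2 h; rfl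
  | succ m ih =>
    obtain ⟨r, rfl⟩ := Nat.exists_eq_add_one.2 (Nat.zero_lt_of_lt h)
    rw [qBinom_succ_succ, ih (by omega), ih (by omega), mul_zero, add_zero]

lemma qBinom_pos {q : ℕ} (hq : 0 < q) {m r : ℕ} (h : r ≤ m) : 0 < qBinom q m r := by
  induction m generalizing r with
  | zero => simp [Nat.le_zero.1 h]
  | succ m ih =>
    cases r with
    | zero => simp
    | succ r =>
      rw [qBinom_succ_succ]
      exact Nat.add_pos_right _ (Nat.mul_pos (pow_pos hq _) (ih (by omega)))

lemma prod_range_succ_pow_sub_one {R : Type*} [CommRing R] (x : R) (m r : ℕ) :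
    ∏ i ∈ range (r + 1), (x ^ (m + 1 - i) - 1) =
      (x ^ (m + 1) - 1) * ∏ i ∈ range r, (x ^ (m - i) - 1) := by
  rw [prod_range_succ', mul_comm]
  simp [Nat.add_sub_add_right]

lemma qBinom_mul_prod {R : Type*} [CommRing R] (q m r : ℕ) :
    (qBinom q m r : R) * ∏ i ∈ range r, ((q : R) ^ (r - i) - 1) =
      ∏ i ∈ range r, ((q : R) ^ (m - i) - 1) := by
  induction m generalizing r with
  | zero => cases r <;> simp [qBinom, prod_range_succ']
  | succ m ih =>
    cases r with
    | zero => simp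
    | succ r =>
      have h1 := ih (r + 1)
      rw [prod_range_succ_pow_sub_one, prod_range_succ] at h1
      -- for `m < r` both sides vanish because of the factor `q ^ (m - m) - 1`
      have key : (∏ i ∈ range r, ((q : R) ^ (m - i) - 1)) * (q ^ (m - r) * q ^ (r + 1)) =
          (∏ i ∈ range r, ((q : R) ^ (m - i) - 1)) * q ^ (m + 1) := by
        rcases le_or_gt r m with hrm | hmr
        · rw [← pow_add, show m - r + (r + 1) = m + 1 by omega]
        · rw [prod_eq_zero (mem_range.2 hmr) (by simp), zero_mul, zero_mul]
      rw [qBinom_succ_succ, prod_range_succ_pow_sub_one, prod_range_succ_pow_sub_one]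
      push_cast
      linear_combination h1 + (q : R) ^ (m - r) * ((q : R) ^ (r + 1) - 1) * ih r + key

lemma prod_pow_sub_one_ne_zero {q : ℕ} (hq : 1 < q) (r : ℕ) :
    ∏ i ∈ range r, ((q : ℚ) ^ (r - i) - 1) ≠ 0 :=
  prod_ne_zero_iff.2 fun i hi => sub_ne_zero.2 <| ne_of_gt <|
    one_lt_pow₀ (by exact_mod_cast hq) (by simp at hi; omega)

lemma qBinom_succ_mul {q : ℕ} (hq : 1 < q) (m r : ℕ) :
    (qBinom q (m + 1) (r + 1) : ℚ) * ((q : ℚ) ^ (r + 1) - 1) =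
      ((q : ℚ) ^ (m + 1) - 1) * qBinom q m r := by
  apply mul_right_cancel₀ (prod_pow_sub_one_ne_zero hq r)
  have h := qBinom_mul_prod (R := ℚ) q (m + 1) (r + 1)
  rw [prod_range_succ_pow_sub_one, prod_range_succ_pow_sub_one, ← qBinom_mul_prod q m r] at h
  linear_combination h

lemma gaussBinom_eq_qBinom {q : ℕ} (hq : 1 < q) (m r : ℕ) : gaussBinom q m r = qBinom q m r := by
  have hcast : ∀ m, ((∏ i ∈ range r, (q ^ (m - i) - 1) : ℕ) : ℤ) =
      ∏ i ∈ range r, ((q : ℤ) ^ (m - i) - 1) := fun m => by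
    push_cast [Nat.cast_sub (Nat.one_le_pow _ q (by omega))]; rfl
  have hpos : 0 < ∏ i ∈ range r, (q ^ (r - i) - 1) :=
    prod_pos fun i hi => Nat.sub_pos_of_lt (Nat.one_lt_pow (by simp at hi; omega) hq)
  have h : ∏ i ∈ range r, (q ^ (m - i) - 1) = qBinom q m r * ∏ i ∈ range r, (q ^ (r - i) - 1) := by
    apply Nat.cast_injective (R := ℤ)
    push_cast [hcast]
    exact (qBinom_mul_prod q m r).symm
  rw [gaussBinom, h, Nat.mul_div_cancel _ hpos]

end QBinom

section Perp

variable {𝕜 : Type*} [Field 𝕜]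

lemma dotProductBilin_nondegenerate :
    (dotProductBilin 𝕜 𝕜 : LinearMap.BilinForm 𝕜 (Fin n → 𝕜)).Nondegenerate := by
  refine ⟨fun x hx => funext fun i => ?_, fun y hy => funext fun i => ?_⟩
  · simpa using hx (Pi.single i 1)
  · simpa using hy (Pi.single i 1)

lemma stdPerp_eq_orthogonal (K : Submodule 𝕜 (Fin n → 𝕜)) :
    stdPerp K = LinearMap.BilinForm.orthogonal (dotProductBilin 𝕜 𝕜) K := by
  ext x
  simp [stdPerp, LinearMap.BilinForm.mem_orthogonal_iff, dotProduct, mul_comm]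

lemma finrank_stdPerp (K : Submodule 𝕜 (Fin n → 𝕜)) :
    finrank 𝕜 (stdPerp K) = n - finrank 𝕜 K := by
  rw [stdPerp_eq_orthogonal, LinearMap.BilinForm.finrank_orthogonal dotProductBilin_nondegenerate,
    finrank_fin_fun]

lemma stdPerp_stdPerp (K : Submodule 𝕜 (Fin n → 𝕜)) : stdPerp (stdPerp K) = K := by
  rw [stdPerp_eq_orthogonal, stdPerp_eq_orthogonal]
  exact LinearMap.BilinForm.orthogonal_orthogonal dotProductBilin_nondegenerate
    (fun x y h => by simpa [dotProduct_comm] using h) K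

lemma le_stdPerp_comm {T K : Submodule 𝕜 (Fin n → 𝕜)} : T ≤ stdPerp K ↔ K ≤ stdPerp T :=
  ⟨fun h x hx y hy => by simpa [mul_comm] using h hy x hx,
   fun h x hx y hy => by simpa [mul_comm] using h hy x hx⟩

end Perp

section Hyperplane

variable {𝕜 V : Type*} [Field 𝕜] [AddCommGroup V] [Module 𝕜 V] [FiniteDimensional 𝕜 V]

lemma finrank_inf_add_one_of_not_le {W W₁ K : Submodule 𝕜 V} (hWW₁ : W ≤ W₁)
    (hW : finrank 𝕜 W + 1 = finrank 𝕜 W₁) (hK : K ≤ W₁) (hKW : ¬ K ≤ W) :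
    finrank 𝕜 ↥(K ⊓ W) + 1 = finrank 𝕜 K := by
  have hlt : W < K ⊔ W := le_sup_right.lt_of_ne fun h => hKW (h ▸ le_sup_left)
  have hsup : K ⊔ W = W₁ := by
    have := Submodule.finrank_lt_finrank_of_lt hlt
    exact Submodule.eq_of_le_of_finrank_le (sup_le hK hWW₁) (by omega)
  have := Submodule.finrank_sup_add_finrank_inf_eq K W
  rw [hsup] at this
  omega

end Hyperplane

section Counting

variable {V : Type*} [AddCommGroup V] [Module F V] [Fintype V]

local notation "q" => Fintype.card F

noncomputable instance : Fintype (Submodule F V) :=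
  haveI : Finite (Submodule F V) := Finite.of_injective _ SetLike.coe_injective
  Fintype.ofFinite _

noncomputable def extensionsNotLE (U X Y : Submodule F V) : Finset (Submodule F V) :=
  univ.filter fun U' => U ≤ U' ∧ U' ≤ X ∧ finrank F U' = finrank F U + 1 ∧ ¬ U' ≤ Y

lemma card_filter_mem_notMem (X Y : Submodule F V) :
    (#(univ.filter fun v => v ∈ X ∧ v ∉ Y) : ℚ) =
      (q : ℚ) ^ finrank F X - (q : ℚ) ^ finrank F ↥(X ⊓ Y) := by
  have hcard : ∀ Z : Submodule F V, #(univ.filter (· ∈ Z)) = q ^ finrank F Z := fun Z => by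
    rw [← Fintype.card_subtype, ← card_eq_pow_finrank]
  have h := card_filter_add_card_filter_not (s := univ.filter (· ∈ X)) (· ∈ Y)
  rw [filter_filter, filter_filter, hcard] at h
  rw [eq_sub_iff_add_eq, ← Nat.cast_pow, ← Nat.cast_pow, ← h, ← hcard]
  simp only [Submodule.mem_inf]
  push_cast
  ring

lemma card_extensionsNotLE_mul {U X Y : Submodule F V} (hUX : U ≤ X) (hUY : U ≤ Y) :
    (#(extensionsNotLE U X Y) : ℚ) * ((q : ℚ) ^ (finrank F U + 1) - (q : ℚ) ^ finrank F U) =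
      (q : ℚ) ^ finrank F X - (q : ℚ) ^ finrank F ↥(X ⊓ Y) := by
  have hext : ∀ {v}, v ∉ Y → finrank F ↥(U ⊔ F ∙ v) = finrank F U + 1 := fun hv =>
    Submodule.finrank_sup_span_singleton fun hvU => hv (hUY hvU)
  have hfiber : ∀ U' ∈ extensionsNotLE U X Y,
      (#((univ.filter fun v => v ∈ X ∧ v ∉ Y).filter (fun v => U ⊔ F ∙ v = U')) : ℚ) =
        (q : ℚ) ^ (finrank F U + 1) - (q : ℚ) ^ finrank F U := by
    intro U' hU'
    simp only [extensionsNotLE, mem_filter, mem_univ, true_and] at hU'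
    obtain ⟨hUU', hU'X, hrank, hU'Y⟩ := hU'
    have hinf : U' ⊓ Y = U := by
      have hlt : U' ⊓ Y < U' := inf_le_left.lt_of_ne fun h => hU'Y (h ▸ inf_le_right)
      have := Submodule.finrank_lt_finrank_of_lt hlt
      exact (Submodule.eq_of_le_of_finrank_le (le_inf hUU' hUY) (by omega)).symm
    have hfiber_eq : (univ.filter fun v => v ∈ X ∧ v ∉ Y).filter (fun v => U ⊔ F ∙ v = U') =
        univ.filter fun v => v ∈ U' ∧ v ∉ Y := by
      ext v
      simp only [mem_filter, mem_univ, true_and]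
      constructor
      · rintro ⟨⟨-, hvY⟩, rfl⟩
        exact ⟨Submodule.mem_sup_right (Submodule.mem_span_singleton_self v), hvY⟩
      · rintro ⟨hvU', hvY⟩
        refine ⟨⟨hU'X hvU', hvY⟩, Submodule.eq_of_le_of_finrank_eq ?_ (by rw [hext hvY, hrank])⟩
        exact sup_le hUU' ((Submodule.span_singleton_le_iff_mem _ _).2 hvU')
    rw [hfiber_eq, card_filter_mem_notMem, hinf, hrank]
  rw [← card_filter_mem_notMem, card_eq_sum_card_fiberwise (f := fun v => U ⊔ F ∙ v)
    (t := extensionsNotLE U X Y)]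
  · push_cast
    rw [sum_congr rfl hfiber, sum_const, nsmul_eq_mul]
  · intro v hv
    simp only [coe_filter, mem_univ, true_and, Set.mem_ofPred_eq] at hv
    simp only [extensionsNotLE, coe_filter, mem_univ, true_and, Set.mem_ofPred_eq]
    exact ⟨le_sup_left, sup_le hUX ((Submodule.span_singleton_le_iff_mem _ _).2 hv.1), hext hv.2,
      fun h => hv.2 (h (Submodule.mem_sup_right (Submodule.mem_span_singleton_self v)))⟩

lemma sum_pow_sub_pow_inf_eq (𝒦 : Finset (Submodule F V)) {U X Y : Submodule F V}
    (hUY : U ≤ Y) (h𝒦 : ∀ K ∈ 𝒦, U ≤ K ∧ K ≤ X) :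
    ∑ K ∈ 𝒦, ((q : ℚ) ^ finrank F K - (q : ℚ) ^ finrank F ↥(K ⊓ Y)) =
      ((q : ℚ) ^ (finrank F U + 1) - (q : ℚ) ^ finrank F U) *
        ∑ U' ∈ extensionsNotLE U X Y, (#(𝒦.filter (U' ≤ ·)) : ℚ) := by
  have hrow : ∀ K ∈ 𝒦, (extensionsNotLE U X Y).filter (· ≤ K) = extensionsNotLE U K Y := by
    intro K hK
    ext U'
    simp only [extensionsNotLE, mem_filter, mem_univ, true_and]
    exact ⟨fun ⟨⟨h₁, _, h₃, h₄⟩, h₂⟩ => ⟨h₁, h₂, h₃, h₄⟩,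
      fun ⟨h₁, h₂, h₃, h₄⟩ => ⟨⟨h₁, h₂.trans (h𝒦 K hK).2, h₃, h₄⟩, h₂⟩⟩
  calc ∑ K ∈ 𝒦, ((q : ℚ) ^ finrank F K - (q : ℚ) ^ finrank F ↥(K ⊓ Y))
      = ∑ K ∈ 𝒦, (#((extensionsNotLE U X Y).filter (· ≤ K)) : ℚ) *
          ((q : ℚ) ^ (finrank F U + 1) - (q : ℚ) ^ finrank F U) :=
        sum_congr rfl fun K hK => by
          rw [hrow K hK, card_extensionsNotLE_mul (h𝒦 K hK).1 hUY]
    _ = _ := by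
      rw [← sum_mul, mul_comm]
      congr 1
      exact_mod_cast sum_card_bipartiteAbove_eq_sum_card_bipartiteBelow (fun K U' => U' ≤ K)

lemma card_filter_ge_mul {B : Finset (Submodule F V)} {k : ℕ} (hB : ∀ K ∈ B, finrank F K = k)
    {U : Submodule F V} {μ : ℚ}
    (hμ : ∀ U' : Submodule F V, finrank F U' = finrank F U + 1 → (#(B.filter (U' ≤ ·)) : ℚ) = μ) :
    (#(B.filter (U ≤ ·)) : ℚ) * ((q : ℚ) ^ k - (q : ℚ) ^ finrank F U) =
      ((q : ℚ) ^ finrank F V - (q : ℚ) ^ finrank F U) * μ := by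
  have h := sum_pow_sub_pow_inf_eq (B.filter (U ≤ ·)) (X := ⊤) le_rfl
    fun K hK => ⟨(mem_filter.1 hK).2, le_top⟩
  have hrow : ∀ K ∈ B.filter (U ≤ ·), (q : ℚ) ^ finrank F K - (q : ℚ) ^ finrank F ↥(K ⊓ U) =
      (q : ℚ) ^ k - (q : ℚ) ^ finrank F U := fun K hK => by
    rw [mem_filter] at hK
    rw [hB K hK.1, inf_eq_right.2 hK.2]
  have hcol : ∀ U' ∈ extensionsNotLE U ⊤ U, (#((B.filter (U ≤ ·)).filter (U' ≤ ·)) : ℚ) = μ := by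
    intro U' hU'
    simp only [extensionsNotLE, mem_filter, mem_univ, true_and] at hU'
    rw [filter_filter, ← hμ U' hU'.2.2.1]
    congr 3
    ext K
    exact ⟨fun h => h.2, fun h => ⟨hU'.1.trans h, h⟩⟩
  have hext := card_extensionsNotLE_mul (X := ⊤) le_top (le_refl U)
  rw [finrank_top, top_inf_eq] at hext
  rw [sum_congr rfl hrow, sum_congr rfl hcol, sum_const, sum_const, nsmul_eq_mul, nsmul_eq_mul] at h
  rw [← hext]
  linear_combination h

lemma card_filter_not_le_mul {B : Finset (Submodule F V)} {k : ℕ}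
    (hB : ∀ K ∈ B, finrank F K = k + 1) {U W W₁ : Submodule F V} (hUW : U ≤ W) (hWW₁ : W ≤ W₁)
    (hW : finrank F W + 1 = finrank F W₁) {μ : ℚ}
    (hμ : ∀ U' ∈ extensionsNotLE U W₁ W, (#(B.filter fun K => U' ≤ K ∧ K ≤ W₁) : ℚ) = μ) :
    (#((B.filter fun K => U ≤ K ∧ K ≤ W₁).filter (¬ · ≤ W)) : ℚ) * ((q : ℚ) ^ (k + 1) - q ^ k) =
      ((q : ℚ) ^ (finrank F W + 1) - (q : ℚ) ^ finrank F W) * μ := by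
  set 𝒦 := B.filter fun K => U ≤ K ∧ K ≤ W₁
  have h := sum_pow_sub_pow_inf_eq 𝒦 (X := W₁) (Y := W) hUW fun K hK => (mem_filter.1 hK).2
  have hvanish : ∀ K ∈ 𝒦, (q : ℚ) ^ finrank F K - (q : ℚ) ^ finrank F ↥(K ⊓ W) ≠ 0 → ¬ K ≤ W :=
    fun K _ hne hKW => hne (by rw [inf_eq_left.2 hKW, sub_self])
  have hrow : ∀ K ∈ 𝒦.filter (¬ · ≤ W), (q : ℚ) ^ finrank F K - (q : ℚ) ^ finrank F ↥(K ⊓ W) =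
      (q : ℚ) ^ (k + 1) - (q : ℚ) ^ k := fun K hK => by
    simp only [𝒦, mem_filter] at hK
    have := finrank_inf_add_one_of_not_le hWW₁ hW hK.1.2.2 hK.2
    rw [hB K hK.1.1] at this ⊢
    rw [show finrank F ↥(K ⊓ W) = k by omega]
  have hcol : ∀ U' ∈ extensionsNotLE U W₁ W, (#(𝒦.filter (U' ≤ ·)) : ℚ) = μ := by
    intro U' hU'
    rw [← hμ U' hU']
    simp only [extensionsNotLE, mem_filter, mem_univ, true_and] at hU'
    rw [filter_filter]
    congr 3
    ext K
    exact ⟨fun h => ⟨h.2, h.1.2⟩, fun h => ⟨⟨hU'.1.trans h.1, h.2⟩, h.1⟩⟩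
  rw [← sum_filter_of_ne hvanish, sum_congr rfl hrow, sum_congr rfl hcol, sum_const, sum_const,
    nsmul_eq_mul, nsmul_eq_mul] at h
  have hext := card_extensionsNotLE_mul (hUW.trans hWW₁) hUW
  rw [inf_eq_right.2 hWW₁, ← hW] at hext
  linear_combination h + μ * hext

lemma card_filter_between_eq_sub {B : Finset (Submodule F V)} {k : ℕ}
    (hB : ∀ K ∈ B, finrank F K = k + 1) {U W W₁ : Submodule F V} (hUW : U ≤ W) (hWW₁ : W ≤ W₁)
    (hW : finrank F W + 1 = finrank F W₁) (hkW : k ≤ finrank F W) {μ : ℚ}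
    (hμ : ∀ U' ∈ extensionsNotLE U W₁ W, (#(B.filter fun K => U' ≤ K ∧ K ≤ W₁) : ℚ) = μ) :
    (#(B.filter fun K => U ≤ K ∧ K ≤ W) : ℚ) =
      #(B.filter fun K => U ≤ K ∧ K ≤ W₁) - (q : ℚ) ^ (finrank F W - k) * μ := by
  set 𝒦 := B.filter fun K => U ≤ K ∧ K ≤ W₁
  have hsplit := card_filter_add_card_filter_not (s := 𝒦) (· ≤ W)
  have hle : 𝒦.filter (· ≤ W) = B.filter fun K => U ≤ K ∧ K ≤ W := by
    rw [filter_filter]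
    congr 1
    ext K
    exact ⟨fun h => ⟨h.1.1, h.2⟩, fun h => ⟨⟨h.1, h.2.trans hWW₁⟩, h.2⟩⟩
  have hq : (q : ℚ) ^ (k + 1) - (q : ℚ) ^ k ≠ 0 := by
    have : (1 : ℚ) < q := by exact_mod_cast Fintype.one_lt_card
    rw [pow_succ, ← mul_sub_one]
    exact mul_ne_zero (pow_ne_zero _ (by positivity)) (by linarith)
  have hpow : (q : ℚ) ^ (finrank F W + 1) - (q : ℚ) ^ finrank F W =
      (q : ℚ) ^ (finrank F W - k) * ((q : ℚ) ^ (k + 1) - (q : ℚ) ^ k) := by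
    rw [mul_sub, ← pow_add, ← pow_add, show finrank F W - k + (k + 1) = finrank F W + 1 by omega,
      Nat.sub_add_cancel hkW]
  have hD : (#(𝒦.filter (¬ · ≤ W)) : ℚ) = (q : ℚ) ^ (finrank F W - k) * μ := by
    apply mul_right_cancel₀ hq
    linear_combination card_filter_not_le_mul hB hUW hWW₁ hW hμ + μ * hpow
  rw [← hle]
  push_cast [← hsplit]
  linear_combination -hD

end Counting

section Design

local notation "q" => Fintype.card F

variable {t k lam : ℕ} {B : Finset (Submodule F (Fin n → F))}

lemma IsDesign.card_filter_ge (hB : IsDesign F n t k lam B) (ht : t ≤ k) (hk : k ≤ n)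
    {U : Submodule F (Fin n → F)} (hU : finrank F U ≤ t) :
    (#(B.filter (U ≤ ·)) : ℚ) =
      lam * qBinom q (n - finrank F U) (k - finrank F U) / qBinom q (n - t) (k - t) := by
  have hq : 1 < q := Fintype.one_lt_card
  have hG : (qBinom q (n - t) (k - t) : ℚ) ≠ 0 := by
    exact_mod_cast (qBinom_pos (by omega) (by omega)).ne'
  obtain ⟨d, hd⟩ := Nat.exists_eq_add_of_le hU
  induction d generalizing U with
  | zero =>
    rw [add_zero] at hd
    rw [← hd, hB.2 U hd.symm, mul_div_assoc, div_self hG, mul_one]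
  | succ d ih =>
    set i := finrank F U with hi
    have h := card_filter_ge_mul hB.1 (U := U)
      (μ := lam * qBinom q (n - (i + 1)) (k - (i + 1)) / qBinom q (n - t) (k - t))
      fun U' hU' => by rw [ih (U := U') (by omega) (by omega), hU']
    rw [finrank_fin_fun, ← hi] at h
    have habs := qBinom_succ_mul hq (n - (i + 1)) (k - (i + 1))
    rw [show n - (i + 1) + 1 = n - i by omega, show k - (i + 1) + 1 = k - i by omega] at habs
    have hk' : (q : ℚ) ^ k = q ^ i * q ^ (k - i) := by
      rw [← pow_add, Nat.add_sub_cancel' (by omega)]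
    have hn' : (q : ℚ) ^ n = q ^ i * q ^ (n - i) := by
      rw [← pow_add, Nat.add_sub_cancel' (by omega)]
    have hne : (q : ℚ) ^ i * ((q : ℚ) ^ (k - i) - 1) ≠ 0 := by
      have : (1 : ℚ) < (q : ℚ) ^ (k - i) := one_lt_pow₀ (by exact_mod_cast hq) (by omega)
      exact mul_ne_zero (pow_ne_zero _ (by positivity)) (by linarith)
    apply mul_right_cancel₀ hne
    rw [hk', hn', mul_div_assoc', eq_div_iff hG] at h
    rw [div_mul_eq_mul_div, eq_div_iff hG]
    linear_combination h - lam * (q : ℚ) ^ i * habs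

lemma IsDesign.card_filter_between (hB : IsDesign F n t k lam B) (ht : t ≤ k) (hk : k ≤ n)
    {j : ℕ} {U W : Submodule F (Fin n → F)} (hUW : U ≤ W) (hUj : finrank F U + j ≤ t)
    (hW : finrank F W + j = n) :
    (#(B.filter fun K => U ≤ K ∧ K ≤ W) : ℚ) =
      lam * qBinom q (n - (finrank F U + j)) (k - finrank F U) / qBinom q (n - t) (k - t) := by
  induction j generalizing U W with
  | zero =>
    obtain rfl : W = ⊤ := Submodule.eq_top_of_finrank_eq (by rw [finrank_fin_fun]; omega)
    simp only [le_top, and_true, add_zero]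
    exact hB.card_filter_ge ht hk (by omega)
  | succ j ih =>
    set i := finrank F U
    by_cases hkW : k ≤ finrank F W
    · have hWtop : W ≠ ⊤ := fun h => by rw [h, finrank_top, finrank_fin_fun] at hW; omega
      obtain ⟨v, -, hv⟩ := SetLike.exists_of_lt (lt_top_iff_ne_top.2 hWtop)
      have hW₁ := (Submodule.finrank_sup_span_singleton hv).symm
      have h := card_filter_between_eq_sub (k := k - 1) (fun K hK => by rw [hB.1 K hK]; omega)
        hUW le_sup_left hW₁ (by omega)
        (μ := lam * qBinom q (n - (i + 1 + j)) (k - (i + 1)) / qBinom q (n - t) (k - t))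
        fun U' hU' => by
          simp only [extensionsNotLE, mem_filter, mem_univ, true_and] at hU'
          rw [ih hU'.2.1 (by omega) (by omega), hU'.2.2.1]
      rw [h, ih (hUW.trans le_sup_left) (by omega) (by omega)]
      have hpascal := qBinom_succ_succ q (n - (i + (j + 1))) (k - (i + 1))
      rw [show n - (i + (j + 1)) + 1 = n - (i + j) by omega, show k - (i + 1) + 1 = k - i by omega,
        show n - (i + (j + 1)) - (k - (i + 1)) = finrank F W - (k - 1) by omega,
        show n - (i + (j + 1)) = n - (i + 1 + j) by omega] at hpascal
      rw [show i + (j + 1) = i + 1 + j by omega, hpascal]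
      push_cast
      ring
    · have hzero : B.filter (fun K => U ≤ K ∧ K ≤ W) = ∅ :=
        filter_eq_empty_iff.2 fun K hK hUKW => hkW (hB.1 K hK ▸ Submodule.finrank_mono hUKW.2)
      rw [hzero, qBinom_eq_zero_of_lt q (by omega)]
      simp

lemma IsDesign.card_filter_le (hB : IsDesign F n t k lam B) (ht : t ≤ k) (hk : k ≤ n)
    {W : Submodule F (Fin n → F)} (hW : finrank F W + t = n) :
    #(B.filter (· ≤ W)) = lam * gaussBinom q (n - t) k / gaussBinom q (n - t) (k - t) := by
  have hq : 1 < q := Fintype.one_lt_card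
  have hG : 0 < qBinom q (n - t) (k - t) := qBinom_pos (by omega) (by omega)
  have h := hB.card_filter_between ht hk bot_le (by simp) hW
  simp only [finrank_bot, zero_add, Nat.sub_zero, bot_le, true_and] at h
  rw [eq_div_iff (by positivity)] at h
  rw [gaussBinom_eq_qBinom hq, gaussBinom_eq_qBinom hq]
  exact (Nat.div_eq_of_eq_mul_left hG (by exact_mod_cast h.symm)).symm

end Design

/-- the complementary design `B^⊥` is a `t-(n, n-k, λ^⊥; q)` design. -/
theorem perp_design (F : Type*) [Field F] [Fintype F] (n t k lam : ℕ)
    (ht : t ≤ k) (hk : k ≤ n)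
    (B : Finset (Submodule F (Fin n → F))) (hB : IsDesign F n t k lam B) :
    IsDesign F n t (n - k)
      (lam * gaussBinom (Fintype.card F) (n - t) k /
        gaussBinom (Fintype.card F) (n - t) (k - t))
      (B.image stdPerp) := by
  refine ⟨fun P hP => ?_, fun T hT => ?_⟩
  · obtain ⟨K, hK, rfl⟩ := mem_image.1 hP
    rw [finrank_stdPerp, hB.1 K hK]
  · rw [filter_image, card_image_of_injective _ (Function.LeftInverse.injective stdPerp_stdPerp),
      filter_congr fun K _ => le_stdPerp_comm]
    exact hB.card_filter_le ht hk (by rw [finrank_stdPerp, hT]; omega)
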